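/- Define a Lag system with context length 2 over pairs (σ, c) ∈ Σ × {blank, p} by the rules: (x,blank)(y,blank) → (x,blank), (x,blank)(y,p) → (x,p), (x,p)(y,blank) → (x,blank), for all x, y ∈ Σ. Starting from the string (s₁,blank)...(s_{n-2},blank)(s_{n-1},p)(sₙ,blank) with n ≥ 3, after n−1 iterations the memory string is (sₙ,blank)(s₁,blank)...(s_{n-2},p)(s_{n-1},blank); that is, the control token p moves one position counterclockwise in the circular queue. -/

import Mathlib

namespace Stmt2

/-- Control symbols: blank or the pulse token `p`. -/
inductive Ctl | blank | p
deriving DecidableEq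

/-- The rule set `R_p`, acting on control coordinates:
`blank·blank → blank`, `blank·p → p`, `p·blank → blank`. -/
def rc : Ctl → Ctl → Option Ctl
  | .blank, .blank => some .blank
  | .blank, .p => some .p
  | .p, .blank => some .blank
  | _, _ => none

/-- One Lag iteration with context length 2: match the control symbols of the
first two pairs, delete the first pair, append a pair with the first pair's
data symbol and the rule's output control symbol; halt (`none`) if no rule matches. -/
def step {α : Type*} (r : Ctl → Ctl → Option Ctl) :
    List (α × Ctl) → Option (List (α × Ctl))
  | (x, a) :: (y, b) :: rest => (r a b).map fun c => (y, b) :: rest ++ [(x, c)]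
  | _ => none

/-- `k` iterations of the Lag system. -/
def iterL {α : Type*} (r : Ctl → Ctl → Option Ctl) :
    ℕ → List (α × Ctl) → Option (List (α × Ctl))
  | 0, s => some s
  | k + 1, s => (step r s).bind (iterL r k)

end Stmt2

/-!
Each Lag step moves the head of the queue to its back, so the queue is rotated once per step
while the control symbols are rewritten. A blank followed by a blank stays blank, so the first
`n - 3` steps just rotate `(s₁,blank)…(s_{n-3},blank)` to the back. The remaining two steps see
`(s_{n-2},blank)(s_{n-1},p)` and then `(s_{n-1},p)(sₙ,blank)`: the first hands `p` to `s_{n-2}`,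
the second blanks `s_{n-1}`.
-/

namespace Stmt2

variable {α : Type*}

theorem iterL_add (r : Ctl → Ctl → Option Ctl) (a b : ℕ) (l : List (α × Ctl)) :
    iterL r (a + b) l = (iterL r a l).bind (iterL r b) := by
  induction a generalizing l with
  | zero => simp [iterL]
  | succ a ih =>
    rw [Nat.add_right_comm]
    simp only [iterL, Option.bind_assoc, ih]

theorem iterL_blanks_append {r : Ctl → Ctl → Option Ctl} (hr : r .blank .blank = some .blank)
    (u : List α) (y : α) (rest : List (α × Ctl)) :
    iterL r u.length (u.map (·, Ctl.blank) ++ (y, Ctl.blank) :: rest) =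
      some ((y, Ctl.blank) :: rest ++ u.map (·, Ctl.blank)) := by
  induction u generalizing rest with
  | nil => simp [iterL]
  | cons x u ih =>
    have hstep : step r ((x, Ctl.blank) :: (u.map (·, Ctl.blank) ++ (y, Ctl.blank) :: rest)) =
        some (u.map (·, Ctl.blank) ++ (y, Ctl.blank) :: (rest ++ [(x, Ctl.blank)])) := by
      cases u <;> simp [step, hr]
    simp [iterL, hstep, ih]

theorem iterL_rc_two_pulse (y z w : α) (rest : List (α × Ctl)) :
    iterL rc 2 ((y, Ctl.blank) :: (z, Ctl.p) :: (w, Ctl.blank) :: rest) =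
      some ((w, Ctl.blank) :: rest ++ [(y, Ctl.p), (z, Ctl.blank)]) := by
  simp [iterL, step, rc]

theorem ofFn_pulse_eq_blanks_append (m : ℕ) (s : Fin (m + 3) → α) :
    List.ofFn (fun i : Fin (m + 3) => (s i, if i.val = m + 3 - 2 then Ctl.p else Ctl.blank)) =
      (List.ofFn (s ∘ Fin.castAdd 3)).map (·, Ctl.blank) ++
        [(s (Fin.natAdd m 0), Ctl.blank), (s (Fin.natAdd m 1), Ctl.p),
          (s (Fin.natAdd m 2), Ctl.blank)] := by
  rw [List.ofFn_add, List.map_ofFn]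
  congr 1
  · refine congrArg List.ofFn (funext fun i => ?_)
    have hi : i.val ≠ m + 3 - 2 := by omega
    simp only [Fin.val_castLE, hi, if_false]
    rfl
  · simp [List.ofFn_succ]

theorem ofFn_rotated_pulse_eq_cons_blanks_append (m : ℕ) (s : Fin (m + 3) → α) :
    List.ofFn (fun i : Fin (m + 3) =>
      (s ⟨(i.val + (m + 3 - 1)) % (m + 3), Nat.mod_lt _ (by omega)⟩,
        if i.val = m + 3 - 2 then Ctl.p else Ctl.blank)) =
      (s (Fin.natAdd m 2), Ctl.blank) :: ((List.ofFn (s ∘ Fin.castAdd 3)).map (·, Ctl.blank) ++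
        [(s (Fin.natAdd m 0), Ctl.p), (s (Fin.natAdd m 1), Ctl.blank)]) := by
  have hmod (i : ℕ) (hi : i < m + 3) : (i + 1 + (m + 3 - 1)) % (m + 3) = i := by
    rw [show i + 1 + (m + 3 - 1) = i + (m + 3) by omega, Nat.add_mod_right, Nat.mod_eq_of_lt hi]
  rw [List.ofFn_succ, List.ofFn_add (n := m) (m := 2), List.map_ofFn]
  simp only [List.ofFn_succ, List.ofFn_zero, List.cons.injEq, Prod.mk.injEq]
  refine ⟨⟨congrArg s (Fin.ext ?_), if_neg ?_⟩,
    congrArg₂ (· ++ ·) (congrArg List.ofFn (funext fun i => Prod.ext ?_ (if_neg ?_))) ?_⟩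
  · simp
  · simp
  · exact congrArg s (Fin.ext (hmod i (by omega)))
  · simp only [Fin.val_succ, Fin.val_castLE]; omega
  · simp only [List.cons.injEq, Prod.mk.injEq]
    refine ⟨⟨congrArg s (Fin.ext (hmod m (by omega))), if_pos ?_⟩,
      ⟨congrArg s (Fin.ext (hmod (m + 1) (by omega))), if_neg ?_⟩, trivial⟩ <;> simp

end Stmt2

open Stmt2 in
/-- Starting from `(s₁,blank)...(s_{n-2},blank)(s_{n-1},p)(sₙ,blank)` with `n ≥ 3`,
after `n−1` iterations the memory string is
`(sₙ,blank)(s₁,blank)...(s_{n-2},p)(s_{n-1},blank)`. -/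
theorem stmt2 {α : Type*} (n : ℕ) (hn : 3 ≤ n) (s : Fin n → α) :
    iterL rc (n - 1)
      (List.ofFn fun i : Fin n => (s i, if i.val = n - 2 then Ctl.p else Ctl.blank)) =
    some (List.ofFn fun i : Fin n =>
      (s ⟨(i.val + (n - 1)) % n, Nat.mod_lt _ (by omega)⟩,
        if i.val = n - 2 then Ctl.p else Ctl.blank)) := by
  obtain ⟨m, rfl⟩ : ∃ m, n = m + 3 := ⟨n - 3, by omega⟩
  rw [ofFn_pulse_eq_blanks_append, ofFn_rotated_pulse_eq_cons_blanks_append,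
    show m + 3 - 1 = (List.ofFn (s ∘ Fin.castAdd 3)).length + 2 by simp, iterL_add,
    iterL_blanks_append rfl, Option.bind_some]
  simp only [List.cons_append, List.nil_append]
  exact iterL_rc_two_pulse _ _ _ _
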